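/- Filling an evaluation context preserves 'enough burns': if a one-hole evaluation context K and an expression e both satisfy the enough_burns condition (where the hole counts as having zero unprotected applications and e satisfies enough_burns with nb_unprotected_apps(e) bounded by the count assigned to the hole), then K[e] satisfies enough_burns, and nb_unprotected_apps(K[e]) = nb_unprotected_apps(K) + nb_unprotected_apps(e). -/
import Mathlib


inductive Expr : Type
  | var : String → Expr
  | lit : ℤ → Expr
  | lam : String → Expr → Expr
  | app : Expr → Expr → Expr
  | burn : Expr → Expr
  | pair : Expr → Expr → Expr

def Expr.nbUnprotectedApps : Expr → ℕ
  | .var _ => 0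
  | .lit _ => 0
  | .lam _ _ => 0
  | .burn _ => 0
  | .app e₁ e₂ => 1 + e₁.nbUnprotectedApps + e₂.nbUnprotectedApps
  | .pair e₁ e₂ => e₁.nbUnprotectedApps + e₂.nbUnprotectedApps

def Expr.enoughBurns : Expr → Prop
  | .var _ => True
  | .lit _ => True
  | .lam _ b => b.nbUnprotectedApps = 0 ∧ b.enoughBurns
  | .app e₁ e₂ => e₁.enoughBurns ∧ e₂.enoughBurns
  | .burn e => e.enoughBurns
  | .pair e₁ e₂ => e₁.enoughBurns ∧ e₂.enoughBurns

/-- One-hole evaluation contexts; the hole never occurs under a lambda or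
inside a burn-protected body. -/
inductive Ctx : Type
  | hole : Ctx
  | appL : Ctx → Expr → Ctx
  | appR : Expr → Ctx → Ctx
  | pairL : Ctx → Expr → Ctx
  | pairR : Expr → Ctx → Ctx

/-- Filling the hole of a context with an expression. -/
def Ctx.fill : Ctx → Expr → Expr
  | .hole, e => e
  | .appL K e₂, e => .app (K.fill e) e₂
  | .appR e₁ K, e => .app e₁ (K.fill e)
  | .pairL K e₂, e => .pair (K.fill e) e₂
  | .pairR e₁ K, e => .pair e₁ (K.fill e)

/-- Unprotected applications of a context (the hole counts as zero). -/
def Ctx.nbUnprotectedApps : Ctx → ℕ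
  | .hole => 0
  | .appL K e₂ => 1 + K.nbUnprotectedApps + e₂.nbUnprotectedApps
  | .appR e₁ K => 1 + e₁.nbUnprotectedApps + K.nbUnprotectedApps
  | .pairL K e₂ => K.nbUnprotectedApps + e₂.nbUnprotectedApps
  | .pairR e₁ K => e₁.nbUnprotectedApps + K.nbUnprotectedApps

/-- `enough_burns` for contexts. -/
def Ctx.enoughBurns : Ctx → Prop
  | .hole => True
  | .appL K e₂ => K.enoughBurns ∧ e₂.enoughBurns
  | .appR e₁ K => e₁.enoughBurns ∧ K.enoughBurns
  | .pairL K e₂ => K.enoughBurns ∧ e₂.enoughBurns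
  | .pairR e₁ K => e₁.enoughBurns ∧ K.enoughBurns

/-- Filling an evaluation context preserves `enough_burns`, and unprotected
application counts add up. -/
theorem fill_preserves_enoughBurns (K : Ctx) (e : Expr)
    (hK : K.enoughBurns) (he : e.enoughBurns) :
    (K.fill e).enoughBurns ∧
      (K.fill e).nbUnprotectedApps =
        K.nbUnprotectedApps + e.nbUnprotectedApps := by
  induction K with
  | hole => exact ⟨he, by simp [Ctx.fill, Ctx.nbUnprotectedApps]⟩
  | appL K e₂ ih =>
    obtain ⟨h1, h2⟩ := hK
    obtain ⟨ha, hb⟩ := ih h1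
    exact ⟨⟨ha, h2⟩, by simp [Ctx.fill, Expr.nbUnprotectedApps, Ctx.nbUnprotectedApps, hb]; ring⟩
  | appR e₁ K ih =>
    obtain ⟨h1, h2⟩ := hK
    obtain ⟨ha, hb⟩ := ih h2
    exact ⟨⟨h1, ha⟩, by simp [Ctx.fill, Expr.nbUnprotectedApps, Ctx.nbUnprotectedApps, hb]; ring⟩
  | pairL K e₂ ih =>
    obtain ⟨h1, h2⟩ := hK
    obtain ⟨ha, hb⟩ := ih h1
    exact ⟨⟨ha, h2⟩, by simp [Ctx.fill, Expr.nbUnprotectedApps, Ctx.nbUnprotectedApps, hb]; ring⟩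
  | pairR e₁ K ih =>
    obtain ⟨h1, h2⟩ := hK
    obtain ⟨ha, hb⟩ := ih h2
    exact ⟨⟨h1, ha⟩, by simp [Ctx.fill, Expr.nbUnprotectedApps, Ctx.nbUnprotectedApps, hb]; ring⟩
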